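/- For all integers m, n with 1 ≤ m ≤ n, the grid P_m □ P_n is diametrical (i.e. Γ_b(P_m □ P_n) = diam(P_m □ P_n)) if and only if m = 1, or m = 2 and n = 2. -/

import Mathlib

open SimpleGraph Finset

/-- `S` is a dominating set of `G`: every vertex is in `S` or adjacent to a vertex of `S`. -/
def Dominates {V : Type*} (G : SimpleGraph V) (S : Finset V) : Prop :=
  ∀ v : V, v ∈ S ∨ ∃ u ∈ S, G.Adj v u

/-- `S` is a minimal dominating set: it dominates and no proper subset dominates. -/
def MinimalDominating {V : Type*} (G : SimpleGraph V) (S : Finset V) : Prop :=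
  Dominates G S ∧ ∀ S' : Finset V, S' ⊂ S → ¬ Dominates G S'

/-- The upper domination number `Γ(G)`: maximum cardinality of a minimal dominating set. -/
noncomputable def upperDomination {V : Type*} (G : SimpleGraph V) : ℕ :=
  sSup {k : ℕ | ∃ S : Finset V, MinimalDominating G S ∧ S.card = k}

/-- The domination number `γ(G)`: minimum cardinality of a dominating set. -/
noncomputable def domNumber {V : Type*} (G : SimpleGraph V) : ℕ :=
  sInf {k : ℕ | ∃ S : Finset V, Dominates G S ∧ S.card = k}

/-- The eccentricity of `v` : maximum distance to any other vertex. -/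
noncomputable def eccent {V : Type*} [Fintype V] (G : SimpleGraph V) (v : V) : ℕ :=
  Finset.univ.sup (fun u => G.dist v u)

/-- The diameter of `G` : maximum eccentricity. -/
noncomputable def gDiam {V : Type*} [Fintype V] (G : SimpleGraph V) : ℕ :=
  Finset.univ.sup (fun v => eccent G v)

/-- A broadcast on `G`: `f v ≤ e(v)` for all `v`. -/
def IsBroadcast {V : Type*} [Fintype V] (G : SimpleGraph V) (f : V → ℕ) : Prop :=
  ∀ v : V, f v ≤ _root_.eccent G v

/-- A broadcast `f` dominates `G` if every vertex hears some broadcasting vertex. -/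
def BroadcastDominates {V : Type*} (G : SimpleGraph V) (f : V → ℕ) : Prop :=
  ∀ u : V, ∃ v : V, 1 ≤ f v ∧ G.dist u v ≤ f v

/-- A minimal dominating broadcast: no broadcast `g ≤ f` with `g ≠ f` dominates `G`. -/
def MinimalDominatingBroadcast {V : Type*} [Fintype V] (G : SimpleGraph V) (f : V → ℕ) : Prop :=
  IsBroadcast G f ∧ BroadcastDominates G f ∧
    ∀ g : V → ℕ, IsBroadcast G g → g ≤ f → g ≠ f → ¬ BroadcastDominates G g

/-- The cost of a broadcast. -/
def cost {V : Type*} [Fintype V] (f : V → ℕ) : ℕ := ∑ v, f v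

/-- The upper broadcast domination number `Γ_b(G)`. -/
noncomputable def upperBroadcast {V : Type*} [Fintype V] (G : SimpleGraph V) : ℕ :=
  sSup {k : ℕ | ∃ f : V → ℕ, MinimalDominatingBroadcast G f ∧ cost f = k}

/-- The broadcast domination number `γ_b(G)`. -/
noncomputable def broadcastDomNumber {V : Type*} [Fintype V] (G : SimpleGraph V) : ℕ :=
  sInf {k : ℕ | ∃ f : V → ℕ, IsBroadcast G f ∧ BroadcastDominates G f ∧ cost f = k}

/-!
Every finite graph has `Γ_b ≥ diam`: a vertex of maximum eccentricity broadcasting at strength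
equal to its eccentricity is a minimal dominating broadcast. Conversely, in a minimal dominating
broadcast `f` each broadcasting vertex `v` has a private vertex, heard by `v` alone and at distance
exactly `f v` from it when `f v ≥ 2`. On a path (`m = 1`) this lets `v` own `f v` edges between
itself and its private vertex, disjointly from all other broadcasters, so `Γ_b ≤ n - 1 = diam`; on
the 4-cycle `P_2 □ P_2` it allows at most two broadcasters of strength `1`, so `Γ_b ≤ 2 = diam`.
For `m ≥ 2`, `n ≥ 3`, broadcasting at strength `2` from `(0, 2)` and `m + n - 3` from the opposite
corner is minimal dominating of cost `m + n - 1 > diam`.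
-/

namespace SimpleGraph

lemma natDist_le_length_of_walk_pathGraph {n : ℕ} {i j : Fin n} (w : (pathGraph n).Walk i j) :
    Nat.dist i j ≤ w.length := by
  induction w with
  | nil => simp
  | cons h _ ih =>
    rw [pathGraph_adj] at h
    simp only [Walk.length_cons, Nat.dist] at ih ⊢
    omega

lemma pathGraph_dist_le_natDist {n : ℕ} (i j : Fin n) : (pathGraph n).dist i j ≤ Nat.dist i j := by
  wlog hij : i ≤ j generalizing i j
  · rw [dist_comm, Nat.dist_comm]
    exact this j i (le_of_not_ge hij)
  obtain ⟨k, hk⟩ : ∃ k, (j : ℕ) = i + k := ⟨j - i, by omega⟩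
  induction k generalizing j with
  | zero =>
    obtain rfl : j = i := Fin.ext (by omega)
    simp
  | succ k ih =>
    let j' : Fin n := ⟨i + k, by omega⟩
    have hadj : (pathGraph n).Adj j' j := pathGraph_adj.2 (Or.inl (by simp [j']; omega))
    calc (pathGraph n).dist i j
        ≤ (pathGraph n).dist i j' + (pathGraph n).dist j' j :=
          (pathGraph_preconnected n i j').dist_triangle_left j
      _ ≤ Nat.dist i j' + 1 :=
          add_le_add (ih j' (Fin.mk_le_mk.2 (by omega)) rfl) (dist_eq_one_iff_adj.2 hadj).le
      _ = Nat.dist i j := by simp only [Nat.dist, j']; omega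

lemma pathGraph_dist {n : ℕ} (i j : Fin n) : (pathGraph n).dist i j = Nat.dist i j := by
  refine le_antisymm (pathGraph_dist_le_natDist i j) ?_
  obtain ⟨w, hw⟩ := (pathGraph_preconnected n i j).exists_walk_length_eq_dist
  exact hw ▸ natDist_le_length_of_walk_pathGraph w

lemma dist_boxProd {α β : Type*} {G : SimpleGraph α} {H : SimpleGraph β} {x y : α × β}
    (hG : G.Reachable x.1 y.1) (hH : H.Reachable x.2 y.2) :
    (G □ H).dist x y = G.dist x.1 y.1 + H.dist x.2 y.2 := by
  have h : (G □ H).Reachable x y := reachable_boxProd.2 ⟨hG, hH⟩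
  have := h.coe_dist_eq_edist
  rw [edist_boxProd, ← hG.coe_dist_eq_edist, ← hH.coe_dist_eq_edist] at this
  exact_mod_cast this

end SimpleGraph

lemma grid_dist {m n : ℕ} (x y : Fin m × Fin n) :
    (pathGraph m □ pathGraph n).dist x y = Nat.dist x.1 y.1 + Nat.dist x.2 y.2 := by
  rw [dist_boxProd (pathGraph_preconnected m _ _) (pathGraph_preconnected n _ _),
    pathGraph_dist, pathGraph_dist]

lemma exists_natDist_eq_of_private {n x a r : ℕ} (hx : x < n) (ha : a < n) (hr : 1 ≤ r)
    (hrn : r < n) (hax : Nat.dist a x ≤ r) (h2 : 2 ≤ r → Nat.dist a x = r) :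
    ∃ t < n, Nat.dist x t = r ∧ (a = t ∨ a = x ∧ r = 1) := by
  by_cases hax' : a = x
  · subst hax'
    have hr1 : r = 1 := by
      by_contra
      have := h2 (by omega)
      simp [Nat.dist] at this
      omega
    by_cases hxn : a + 1 < n
    · exact ⟨a + 1, hxn, by simp [Nat.dist]; omega, Or.inr ⟨rfl, hr1⟩⟩
    · exact ⟨a - 1, by omega, by simp [Nat.dist]; omega, Or.inr ⟨rfl, hr1⟩⟩
  · refine ⟨a, ha, ?_, Or.inl rfl⟩
    rw [Nat.dist_comm]
    by_cases h : 2 ≤ r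
    · exact h2 h
    · simp only [Nat.dist] at hax ⊢
      omega

-- `Ico (min x t) (max x t)` are the edges of the path owned by a broadcaster at `x` with private
-- vertex `a`; likewise for `y`, `s`, `b`.
lemma disjoint_Ico_min_max_of_private {x t a y s b : ℕ} (ha : a = t ∨ a = x ∧ Nat.dist x t = 1)
    (hb : b = s ∨ b = y ∧ Nat.dist y s = 1) (hab : Nat.dist y s < Nat.dist a y)
    (hba : Nat.dist x t < Nat.dist b x) :
    Disjoint (Ico (min x t) (max x t)) (Ico (min y s) (max y s)) := by
  rw [Finset.disjoint_left]
  intro e he he'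
  simp only [mem_Ico] at he he'
  simp only [Nat.dist] at ha hb hab hba
  omega

lemma BroadcastDominates.mono {V : Type*} {G : SimpleGraph V} {f g : V → ℕ}
    (hf : BroadcastDominates G f) (hfg : f ≤ g) : BroadcastDominates G g := fun u ↦
  let ⟨v, hv, huv⟩ := hf u
  ⟨v, hv.trans (hfg v), huv.trans (hfg v)⟩

section Broadcast

variable {V : Type*} [Fintype V] {G : SimpleGraph V} {f : V → ℕ}

lemma dist_le_eccent (v u : V) : G.dist v u ≤ _root_.eccent G v :=
  le_sup (mem_univ u)

lemma eccent_le_gDiam (v : V) : _root_.eccent G v ≤ gDiam G :=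
  le_sup (f := _root_.eccent G) (mem_univ v)

lemma minimalDominatingBroadcast_iff [DecidableEq V] :
    MinimalDominatingBroadcast G f ↔ IsBroadcast G f ∧ BroadcastDominates G f ∧
      ∀ v, 1 ≤ f v → ¬ BroadcastDominates G (Function.update f v (f v - 1)) := by
  refine and_congr_right fun hb ↦ and_congr_right fun _ ↦ ⟨fun hmin v hv ↦ ?_, fun h ↦ ?_⟩
  · have hle : Function.update f v (f v - 1) ≤ f := by
      intro w
      rcases eq_or_ne w v with rfl | hw <;> simp [*]
    refine hmin _ (fun w ↦ (hle w).trans (hb w)) hle fun heq ↦ ?_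
    have := congr_fun heq v
    simp only [Function.update_self] at this
    omega
  · intro g _ hgf hne hg
    obtain ⟨v, hv⟩ := (Pi.lt_def.1 (lt_of_le_of_ne hgf hne)).2
    refine h v (by omega) (hg.mono fun w ↦ ?_)
    rcases eq_or_ne w v with rfl | hw
    · simp only [Function.update_self]
      omega
    · simpa [hw] using hgf w

-- Lowering `f v` by one leaves some vertex `p` undominated: `p` is private to `v`.
lemma MinimalDominatingBroadcast.exists_private (hf : MinimalDominatingBroadcast G f) {v : V}
    (hv : 1 ≤ f v) : ∃ p, G.dist p v ≤ f v ∧ (2 ≤ f v → G.dist p v = f v) ∧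
      ∀ w ≠ v, 1 ≤ f w → f w < G.dist p w := by
  classical
  obtain ⟨-, hdom, hmin⟩ := minimalDominatingBroadcast_iff.1 hf
  obtain ⟨p, hp⟩ : ∃ p, ∀ w, 1 ≤ Function.update f v (f v - 1) w →
      Function.update f v (f v - 1) w < G.dist p w := by
    simpa [BroadcastDominates] using hmin v hv
  have hothers : ∀ w ≠ v, 1 ≤ f w → f w < G.dist p w := fun w hw ↦ by
    simpa [hw] using hp w
  obtain ⟨w, hw, hpw⟩ := hdom p
  obtain rfl : w = v := by
    by_contra hwv
    exact absurd hpw (not_le.2 (hothers w hwv hw))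
  refine ⟨p, hpw, fun h2 ↦ le_antisymm hpw ?_, hothers⟩
  have := hp w
  simp only [Function.update_self] at this
  omega

lemma bddAbove_costs_minimalDominatingBroadcast :
    BddAbove {k | ∃ f : V → ℕ, MinimalDominatingBroadcast G f ∧ cost f = k} := by
  refine ⟨∑ v, _root_.eccent G v, ?_⟩
  rintro _ ⟨f, ⟨hb, -⟩, rfl⟩
  exact sum_le_sum fun v _ ↦ hb v

lemma MinimalDominatingBroadcast.cost_le_upperBroadcast (hf : MinimalDominatingBroadcast G f) :
    cost f ≤ upperBroadcast G :=
  le_csSup bddAbove_costs_minimalDominatingBroadcast ⟨f, hf, rfl⟩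

lemma upperBroadcast_le {B : ℕ} (h : ∀ f, MinimalDominatingBroadcast G f → cost f ≤ B) :
    upperBroadcast G ≤ B :=
  csSup_le' fun _ ⟨f, hf, hk⟩ ↦ hk ▸ h f hf

lemma minimalDominatingBroadcast_single [DecidableEq V] {v : V} (hv : 1 ≤ _root_.eccent G v) :
    MinimalDominatingBroadcast G (Pi.single v (_root_.eccent G v)) := by
  refine minimalDominatingBroadcast_iff.2 ⟨fun w ↦ ?_, fun u ↦ ⟨v, ?_, ?_⟩, fun w hw ↦ ?_⟩
  · rcases eq_or_ne w v with rfl | hwv <;> simp [*]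
  · simpa using hv
  · simpa [dist_comm] using dist_le_eccent v u
  · obtain rfl : w = v := by
      by_contra hwv
      simp [hwv] at hw
    obtain ⟨u, -, hu⟩ := exists_mem_eq_sup univ ⟨w, mem_univ w⟩ (G.dist w)
    have hwu : G.dist u w = _root_.eccent G w := dist_comm.trans hu.symm
    rintro hdom
    obtain ⟨x, hx, hux⟩ := hdom u
    rcases eq_or_ne x w with rfl | hxw
    · simp only [Pi.single_eq_same, Function.update_self] at hux
      omega
    · simp [hxw] at hx

lemma gDiam_le_upperBroadcast : gDiam G ≤ upperBroadcast G := by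
  classical
  rcases isEmpty_or_nonempty V with hV | hV
  · simp [gDiam]
  obtain ⟨v, -, hv⟩ := exists_mem_eq_sup univ univ_nonempty (_root_.eccent G)
  rw [gDiam, hv]
  rcases Nat.eq_zero_or_pos (_root_.eccent G v) with h0 | hpos
  · simp [h0]
  · simpa [cost, sum_pi_single'] using
      (minimalDominatingBroadcast_single hpos).cost_le_upperBroadcast

lemma minimalDominatingBroadcast_pair [DecidableEq V] {u w : V} (huw : u ≠ w) {r s : ℕ}
    (hr : 1 ≤ r) (hs : 1 ≤ s) (hru : r ≤ _root_.eccent G u) (hsw : s ≤ _root_.eccent G w)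
    (hdom : ∀ x, G.dist x u ≤ r ∨ G.dist x w ≤ s)
    (hprivu : ∃ p, r - 1 < G.dist p u ∧ s < G.dist p w)
    (hprivw : ∃ p, r < G.dist p u ∧ s - 1 < G.dist p w) :
    MinimalDominatingBroadcast G (Pi.single u r + Pi.single w s : V → ℕ) := by
  set f : V → ℕ := Pi.single u r + Pi.single w s
  have hfu : f u = r := by simp [f, huw]
  have hfw : f w = s := by simp [f, huw.symm]
  have hf0 : ∀ x, x ≠ u → x ≠ w → f x = 0 := fun x hxu hxw ↦ by simp [f, hxu, hxw]
  refine minimalDominatingBroadcast_iff.2 ⟨fun x ↦ ?_, fun x ↦ ?_, fun v hv ↦ ?_⟩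
  · by_cases hxu : x = u
    · exact hxu ▸ hfu ▸ hru
    by_cases hxw : x = w
    · exact hxw ▸ hfw ▸ hsw
    simp [hf0 x hxu hxw]
  · rcases hdom x with h | h
    exacts [⟨u, hfu ▸ hr, hfu ▸ h⟩, ⟨w, hfw ▸ hs, hfw ▸ h⟩]
  have hg : ∀ x, Function.update f v (f v - 1) x = f x - (if x = v then 1 else 0) := fun x ↦ by
    rcases eq_or_ne x v with rfl | hxv <;> simp [*]
  obtain ⟨p, hpu, hpw⟩ : ∃ p, f u - (if u = v then 1 else 0) < G.dist p u ∧
      f w - (if w = v then 1 else 0) < G.dist p w := by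
    by_cases hvu : v = u
    · simpa [hfu, hfw, hvu, huw.symm] using hprivu
    by_cases hvw : v = w
    · simpa [hfu, hfw, hvw, huw] using hprivw
    simp [hf0 v hvu hvw] at hv
  rintro hd
  obtain ⟨x, hx, hpx⟩ := hd p
  rw [hg] at hx hpx
  by_cases hxu : x = u
  · subst hxu
    omega
  by_cases hxw : x = w
  · subst hxw
    omega
  simp only [hf0 x hxu hxw] at hx
  omega

theorem upperBroadcast_le_of_isometry_pathGraph {n : ℕ} (c : V → Fin n)
    (hc : ∀ u v, G.dist u v = (pathGraph n).dist (c u) (c v)) :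
    upperBroadcast G ≤ n - 1 := by
  classical
  refine upperBroadcast_le fun f hf ↦ ?_
  have hd : ∀ u v, G.dist u v = Nat.dist (c u) (c v) := fun u v ↦
    (hc u v).trans (pathGraph_dist _ _)
  have hfn : ∀ v, f v ≤ n - 1 := fun v ↦ (hf.1 v).trans <| Finset.sup_le fun u _ ↦ by
    rw [hd]
    simp only [Nat.dist]
    omega
  have key : ∀ v, 1 ≤ f v → ∃ a t, t < n ∧ Nat.dist (c v) t = f v ∧
      (a = t ∨ a = c v ∧ Nat.dist (c v) t = 1) ∧ ∀ w ≠ v, 1 ≤ f w → f w < Nat.dist a (c w) := by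
    intro v hv
    obtain ⟨p, hpv, hp2, hpw⟩ := hf.exists_private hv
    rw [hd] at hpv hp2
    obtain ⟨t, htn, hvt, hpt⟩ := exists_natDist_eq_of_private (c v).isLt (c p).isLt hv
      (by have := hfn v; omega) hpv hp2
    exact ⟨c p, t, htn, hvt, hvt ▸ hpt, fun w hwv hw ↦ hd p w ▸ hpw w hwv hw⟩
  choose! a t htn hdist hend hpriv using key
  let S := univ.filter fun v ↦ f v ≠ 0
  let E : V → Finset ℕ := fun v ↦ Ico (min (c v : ℕ) (t v)) (max (c v : ℕ) (t v))
  have hS : ∀ v ∈ S, 1 ≤ f v := fun v hv ↦ Nat.one_le_iff_ne_zero.2 (mem_filter.1 hv).2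
  calc cost f = ∑ v ∈ S, f v := (sum_filter_ne_zero _).symm
    _ = ∑ v ∈ S, #(E v) := sum_congr rfl fun v hv ↦ by
        rw [Nat.card_Ico, ← Nat.dist_eq_max_sub_min, hdist v (hS v hv)]
    _ = #(S.biUnion E) := (card_biUnion fun v hv w hw hvw ↦ disjoint_Ico_min_max_of_private
        (hend v (hS v hv)) (hend w (hS w hw))
        (hdist w (hS w hw) ▸ hpriv v (hS v hv) w (Ne.symm hvw) (hS w hw))
        (hdist v (hS v hv) ▸ hpriv w (hS w hw) v hvw (hS v hv))).symm
    _ ≤ #(range (n - 1)) := card_le_card <| biUnion_subset.2 fun v hv e he ↦ by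
        have := htn v (hS v hv)
        simp only [E, mem_Ico, mem_range] at he ⊢
        omega
    _ = n - 1 := card_range _

theorem upperBroadcast_le_two (hdiam : ∀ u v, G.dist u v ≤ 2)
    (hanti : ∀ p v w, G.dist p v = 2 → G.dist p w = 2 → v = w) :
    upperBroadcast G ≤ 2 := by
  classical
  refine upperBroadcast_le fun f hf ↦ ?_
  have hf2 : ∀ v, f v ≤ 2 := fun v ↦ (hf.1 v).trans (Finset.sup_le fun u _ ↦ hdiam v u)
  by_cases hbig : ∃ v, f v = 2
  · obtain ⟨v, hv⟩ := hbig
    have honly : ∀ w ≠ v, f w = 0 := fun w hwv ↦ by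
      by_contra hw
      obtain ⟨p, -, -, hp⟩ := hf.exists_private (Nat.one_le_iff_ne_zero.2 hw)
      have := hp v hwv.symm (by omega)
      have := hdiam p v
      omega
    rw [cost, sum_eq_single v (fun w _ hwv ↦ honly w hwv) (by simp), hv]
  simp only [not_exists] at hbig
  have hf1 : ∀ v, f v ≤ 1 := fun v ↦ by have := hf2 v; have := hbig v; omega
  have hfar : ∀ p v, f v < G.dist p v → 1 ≤ f v → G.dist p v = 2 := fun p v h h1 ↦ by
    have := hdiam p v
    omega
  have hS : #(univ.filter fun v ↦ f v ≠ 0) ≤ 2 := by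
    by_contra h
    obtain ⟨a, ha, b, hb, c, hc, hab, hac, hbc⟩ := two_lt_card.1 (not_le.1 h)
    simp only [mem_filter, mem_univ, true_and, ← Nat.one_le_iff_ne_zero] at ha hb hc
    obtain ⟨p, -, -, hp⟩ := hf.exists_private ha
    exact hbc (hanti p b c (hfar p b (hp b hab.symm hb) hb) (hfar p c (hp c hac.symm hc) hc))
  calc cost f = ∑ v ∈ univ.filter fun v ↦ f v ≠ 0, f v := (sum_filter_ne_zero _).symm
    _ ≤ #(univ.filter fun v ↦ f v ≠ 0) := by
        simpa using sum_le_card_nsmul _ _ 1 fun v _ ↦ hf1 v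
    _ ≤ 2 := hS

end Broadcast

lemma gDiam_grid {m n : ℕ} (hm : 1 ≤ m) (hn : 1 ≤ n) :
    gDiam (pathGraph m □ pathGraph n) = (m - 1) + (n - 1) := by
  refine le_antisymm (Finset.sup_le fun v _ ↦ Finset.sup_le fun u _ ↦ ?_) ?_
  · rw [grid_dist]
    simp only [Nat.dist]
    omega
  · let x : Fin m × Fin n := (⟨0, by omega⟩, ⟨0, by omega⟩)
    let y : Fin m × Fin n := (⟨m - 1, by omega⟩, ⟨n - 1, by omega⟩)
    calc (m - 1) + (n - 1) = (pathGraph m □ pathGraph n).dist x y := by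
          rw [grid_dist]; simp [x, y, Nat.dist]
      _ ≤ gDiam (pathGraph m □ pathGraph n) := (dist_le_eccent x y).trans (eccent_le_gDiam x)

lemma gDiam_lt_upperBroadcast_grid {m n : ℕ} (hm : 2 ≤ m) (hn : 3 ≤ n) :
    gDiam (pathGraph m □ pathGraph n) < upperBroadcast (pathGraph m □ pathGraph n) := by
  classical
  rw [gDiam_grid (by omega) (by omega)]
  let u : Fin m × Fin n := (⟨0, by omega⟩, ⟨2, by omega⟩)
  let w : Fin m × Fin n := (⟨m - 1, by omega⟩, ⟨n - 1, by omega⟩)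
  have huw : u ≠ w := fun h ↦ by
    have := congrArg (·.1.val) h
    simp only [u, w] at this
    omega
  let corner : Fin m × Fin n := (⟨0, by omega⟩, ⟨0, by omega⟩)
  let next : Fin m × Fin n := (⟨1, by omega⟩, ⟨0, by omega⟩)
  have hf := minimalDominatingBroadcast_pair (G := pathGraph m □ pathGraph n) huw
    (r := 2) (s := m + n - 3) (by omega) (by omega)
    ((dist_le_eccent u corner).trans' (by simp [grid_dist, u, corner, Nat.dist]))
    ((dist_le_eccent w corner).trans' (by simp [grid_dist, w, corner, Nat.dist]; omega))
    (fun x ↦ by simp only [grid_dist, u, w, Nat.dist]; omega)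
    ⟨corner, by simp [grid_dist, u, w, corner, Nat.dist]; omega⟩
    ⟨next, by simp [grid_dist, u, w, next, Nat.dist]; omega⟩
  calc (m - 1) + (n - 1) < cost (Pi.single u 2 + Pi.single w (m + n - 3) : Fin m × Fin n → ℕ) := by
        simp only [cost, Pi.add_apply, sum_add_distrib, sum_pi_single', mem_univ, if_true]
        omega
    _ ≤ _ := hf.cost_le_upperBroadcast

lemma upperBroadcast_grid_two_two_le : upperBroadcast (pathGraph 2 □ pathGraph 2) ≤ 2 := by
  refine upperBroadcast_le_two (fun u v ↦ ?_) fun p v w hv hw ↦ ?_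
  · rw [grid_dist]
    simp only [Nat.dist]
    omega
  · rw [grid_dist] at hv hw
    simp only [Nat.dist] at hv hw
    exact Prod.ext (Fin.ext (by omega)) (Fin.ext (by omega))

/-- For `1 ≤ m ≤ n`, the grid `P_m □ P_n` is diametrical iff `m = 1`, or `m = 2 ∧ n = 2`. -/
theorem grid_diametrical_iff (m n : ℕ) (hm : 1 ≤ m) (hmn : m ≤ n) :
    upperBroadcast (pathGraph m □ pathGraph n) = gDiam (pathGraph m □ pathGraph n) ↔
      m = 1 ∨ (m = 2 ∧ n = 2) := by
  refine ⟨fun h ↦ ?_, fun h ↦ ?_⟩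
  · by_contra hne
    exact (gDiam_lt_upperBroadcast_grid (m := m) (n := n) (by omega) (by omega)).ne' h
  have hdiam := gDiam_grid hm (hm.trans hmn)
  have hlow := gDiam_le_upperBroadcast (G := pathGraph m □ pathGraph n)
  rcases h with rfl | ⟨rfl, rfl⟩
  · have := upperBroadcast_le_of_isometry_pathGraph (G := pathGraph 1 □ pathGraph n) Prod.snd
      fun u v ↦ by
        rw [grid_dist, pathGraph_dist, Subsingleton.elim u.1 v.1, Nat.dist_self, zero_add]
    omega
  · have := upperBroadcast_grid_two_two_le
    omega
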